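/- arXiv:1703.04538 — 4 statements merged into one kernel-verified Lean document; each statement's English description precedes it below -/
import Mathlib

section
/- Let A, B, C be positive integers, let x₁ < x₂ < ⋯ < x_A and y₁ < y₂ < ⋯ < y_B be strictly increasing sequences of integers, and let Δ be a set of C integers. Then the number of pairs (i, j) with 1 ≤ i ≤ A, 1 ≤ j ≤ B, and x_i + y_j ∈ Δ is at most Σ_{ℓ=1}^{min(A,B)} min(C, A + B + 1 − 2ℓ). -/
/-!
Split the grid `Fin A × Fin B` into the `min A B` hooks `H_ℓ`: the `ℓ`-th hook consists of
column `ℓ - 1` up to row `B - ℓ` together with row `B - ℓ` from column `ℓ - 1` on (0-indexed).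
Each hook is a chain for the product order, so any map that is strictly monotone for that order
is injective on it. Applied to `(i, j) ↦ x i + y j`, this shows that a hook meets the `C`
diagonals of `Δ` in at most `C` points; applied to `(i, j) ↦ i + j`, which takes values in
`[ℓ - 1, A + B - 1 - ℓ]` on `H_ℓ`, it shows that `H_ℓ` has `A + B + 1 - 2ℓ` points.
-/

open Finset

theorem Set.InjOn.of_isChain_of_strictMonoOn {α β : Type*} [PartialOrder α] [Preorder β]
    {s : Set α} {f : α → β} (hs : IsChain (· ≤ ·) s) (hf : StrictMonoOn f s) : s.InjOn f := by
  intro a ha b hb hab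
  by_contra hne
  rcases hs.total ha hb with hle | hle
  · exact (hf ha hb (hle.lt_of_ne hne)).ne hab
  · exact (hf hb ha (hle.lt_of_ne (Ne.symm hne))).ne hab.symm

theorem Finset.card_le_card_of_isChain_of_strictMonoOn {α β : Type*} [PartialOrder α]
    [Preorder β] {s : Finset α} {t : Finset β} {f : α → β} (hs : IsChain (· ≤ ·) (s : Set α))
    (hf : StrictMonoOn f s) (hst : ∀ a ∈ s, f a ∈ t) : #s ≤ #t :=
  card_le_card_of_injOn f hst (Set.InjOn.of_isChain_of_strictMonoOn hs hf)

theorem StrictMono.fst_add_snd {α β M : Type*} [PartialOrder α] [PartialOrder β] [AddCommMonoid M]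
    [PartialOrder M] [IsOrderedCancelAddMonoid M] {f : α → M} {g : β → M}
    (hf : StrictMono f) (hg : StrictMono g) : StrictMono fun p : α × β => f p.1 + g p.2 := by
  intro p q hpq
  rcases Prod.lt_iff.1 hpq with ⟨h₁, h₂⟩ | ⟨h₁, h₂⟩
  · exact add_lt_add_of_lt_of_le (hf h₁) (hg.monotone h₂)
  · exact add_lt_add_of_le_of_lt (hf.monotone h₁) (hg h₂)

section Hooks

variable {A B : ℕ}

/-- The index `ℓ` of the hook `H_ℓ` containing `(i, j)`. -/
def hookIndex (p : Fin A × Fin B) : ℕ := min (p.1 + 1) (B - p.2)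

theorem hookIndex_mem_Icc (p : Fin A × Fin B) : hookIndex p ∈ Icc 1 (min A B) := by
  have := p.1.isLt
  have := p.2.isLt
  simp only [hookIndex, mem_Icc]
  omega

theorem isChain_filter_hookIndex_eq (s : Finset (Fin A × Fin B)) (ℓ : ℕ) :
    IsChain (· ≤ ·) (({p ∈ s | hookIndex p = ℓ} : Finset _) : Set (Fin A × Fin B)) := by
  intro p hp q hq _
  have := p.2.isLt
  have := q.2.isLt
  simp only [mem_coe, mem_filter] at hp hq
  unfold hookIndex at hp hq
  simp only [Prod.le_def, Fin.le_iff_val_le_val]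
  omega

theorem val_add_val_mem_Icc_of_hookIndex_eq {ℓ : ℕ} {p : Fin A × Fin B} (hp : hookIndex p = ℓ) :
    (p.1 : ℕ) + p.2 ∈ Icc (ℓ - 1) (A + B - 1 - ℓ) := by
  have := p.1.isLt
  have := p.2.isLt
  simp only [hookIndex] at hp
  simp only [mem_Icc]
  omega

end Hooks

theorem grid_diagonal_intersections_bound_general (A B C : ℕ) (x : Fin A → ℤ) (y : Fin B → ℤ)
    (hx : StrictMono x) (hy : StrictMono y)
    (Δ : Finset ℤ) (hΔ : Δ.card = C) :
    ((Finset.univ : Finset (Fin A × Fin B)).filter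
        (fun ij => x ij.1 + y ij.2 ∈ Δ)).card ≤
      ∑ ℓ ∈ Finset.Icc 1 (min A B), min C (A + B + 1 - 2 * ℓ) := by
  rw [card_eq_sum_card_fiberwise fun p _ => hookIndex_mem_Icc p]
  refine sum_le_sum fun ℓ hℓ => ?_
  have hchain := isChain_filter_hookIndex_eq {p | x p.1 + y p.2 ∈ Δ} ℓ
  refine le_min ?_ ?_
  · rw [← hΔ]
    exact card_le_card_of_isChain_of_strictMonoOn hchain ((hx.fst_add_snd hy).strictMonoOn _)
      fun p hp => (mem_filter.1 (mem_filter.1 hp).1).2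
  · calc _ ≤ #(Icc (ℓ - 1) (A + B - 1 - ℓ)) :=
          card_le_card_of_isChain_of_strictMonoOn hchain
            ((Fin.val_strictMono.fst_add_snd Fin.val_strictMono).strictMonoOn _)
            fun p hp => val_add_val_mem_Icc_of_hookIndex_eq (mem_filter.1 hp).2
      _ = A + B + 1 - 2 * ℓ := by
          rw [mem_Icc] at hℓ
          rw [Nat.card_Icc]
          omega

/-- Given strictly increasing integer sequences x₁ < ⋯ < x_A and
y₁ < ⋯ < y_B and a set Δ of C integers, the number of pairs (i,j) with
x_i + y_j ∈ Δ is at most Σ_{ℓ=1}^{min(A,B)} min(C, A + B + 1 − 2ℓ). -/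
theorem grid_diagonal_intersections_bound (A B C : ℕ) (hA : 0 < A) (hB : 0 < B)
    (hC : 0 < C) (x : Fin A → ℤ) (y : Fin B → ℤ)
    (hx : StrictMono x) (hy : StrictMono y)
    (Δ : Finset ℤ) (hΔ : Δ.card = C) :
    ((Finset.univ : Finset (Fin A × Fin B)).filter
        (fun ij => x ij.1 + y ij.2 ∈ Δ)).card ≤
      ∑ ℓ ∈ Finset.Icc 1 (min A B), min C (A + B + 1 - 2 * ℓ) :=
  grid_diagonal_intersections_bound_general A B C x y hx hy Δ hΔ
end

section
/- For all positive integers A, B, C with A + B + C = m, one has Σ_{ℓ=1}^{min(A,B)} min(C, A + B + 1 − 2ℓ) ≤ ⌊(m² + 3)/12⌋. -/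
open Finset

/-- Sum of an arithmetic-progression-type tail. -/
lemma corner_aux_sum (M j : ℕ) : ∀ n, j ≤ n → 2*n ≤ M →
    ∑ ℓ ∈ Ioc j n, (M - 2*ℓ) = (n-j)*(M-n-j-1) := by
  intro n
  induction n with
  | zero => intro h _; interval_cases j; simp
  | succ n ih =>
    intro hj hM
    rcases Nat.lt_or_ge j (n+1) with h | h
    · have hjn : j ≤ n := by omega
      rw [Finset.sum_Ioc_succ_top hjn, ih hjn (by omega)]
      obtain ⟨d, hd⟩ : ∃ d, n = j + d := ⟨n - j, by omega⟩
      obtain ⟨e, he⟩ : ∃ e, M = 2*n+2+e := ⟨M - (2*n+2), by omega⟩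
      subst hd he
      have h1 : j + d - j = d := by omega
      have h2 : 2*(j+d)+2+e - (j+d) - j - 1 = d + 1 + e := by omega
      have h3 : 2*(j+d)+2+e - 2*(j+d+1) = e := by omega
      have h4 : j + d + 1 - j = d + 1 := by omega
      have h5 : 2*(j+d)+2+e - (j+d+1) - j - 1 = d + e := by omega
      rw [h1, h2, h3, h4, h5]; ring
    · have : j = n + 1 := by omega
      subst this; simp

/-- Closed form of the sum when `A ≤ B`. -/
lemma corner_closed_form (A B C : ℕ) (hAB : A ≤ B) :
    ∑ ℓ ∈ Icc 1 A, min C (A + B + 1 - 2 * ℓ) =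
      (min A ((A+B+1-C)/2)) * C
        + (A - min A ((A+B+1-C)/2)) * (B - min A ((A+B+1-C)/2)) := by
  set k := min A ((A+B+1-C)/2) with hk
  have hkA : k ≤ A := min_le_left _ _
  have hkq : k ≤ (A+B+1-C)/2 := min_le_right _ _
  have hkq' : k < A → k = (A+B+1-C)/2 := by omega
  rw [show Icc 1 A = Ioc 0 A from (Finset.Icc_add_one_left_eq_Ioc 0 A)]
  rw [← Finset.Ioc_union_Ioc_eq_Ioc (Nat.zero_le k) hkA,
    Finset.sum_union (by
      rw [Finset.disjoint_left]
      intro x hx hx'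
      simp only [Finset.mem_Ioc] at hx hx'
      omega)]
  have e1 : ∑ ℓ ∈ Ioc 0 k, min C (A + B + 1 - 2 * ℓ) = k * C := by
    have hterm : ∀ ℓ ∈ Ioc 0 k, min C (A + B + 1 - 2 * ℓ) = C := by
      intro ℓ hℓ
      simp only [Finset.mem_Ioc] at hℓ
      omega
    rw [Finset.sum_congr rfl hterm, Finset.sum_const, Nat.card_Ioc, smul_eq_mul]
    rw [Nat.sub_zero]
  have e2 : ∑ ℓ ∈ Ioc k A, min C (A + B + 1 - 2 * ℓ) = (A-k)*(B-k) := by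
    have hterm : ∀ ℓ ∈ Ioc k A, min C (A + B + 1 - 2 * ℓ) = A + B + 1 - 2 * ℓ := by
      intro ℓ hℓ
      simp only [Finset.mem_Ioc] at hℓ
      have h1 : k < A := lt_of_lt_of_le hℓ.1 hℓ.2
      have h2 : (A+B+1-C)/2 < ℓ := by omega
      omega
    rw [Finset.sum_congr rfl hterm, corner_aux_sum (A+B+1) k A hkA (by omega)]
    congr 1
    omega
  rw [e1, e2]

lemma corner_key_ineq (k u v c : ℤ) (hu : 0 ≤ u) (huv : u ≤ v) (hc : 1 ≤ c) (hk : 0 ≤ k)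
    (hku : 1 ≤ k + u) (h1 : 1 ≤ k → c ≤ u + v + 1) (h2 : 1 ≤ u → u + v ≤ c + 1) :
    12 * (k * c + u * v) ≤ (2 * k + u + v + c) ^ 2 + 3 := by
  rcases eq_or_lt_of_le hu with h | hu1
  · have hk1 : 1 ≤ k := by omega
    have hcv : c ≤ v + 1 := by have := h1 hk1; omega
    subst h
    nlinarith [sq_nonneg (k - c), mul_nonneg (by omega : (0:ℤ) ≤ k - 1) (by omega : (0:ℤ) ≤ c - 1),
      mul_nonneg (by omega : (0:ℤ) ≤ v + 1 - c) (by omega : (0:ℤ) ≤ 2*k + v + c + (2*k + 2*c - 1))]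
  · rcases eq_or_lt_of_le hk with h | hk1
    · have hcv : u + v ≤ c + 1 := h2 (by omega)
      subst h
      nlinarith [sq_nonneg (u - v), mul_nonneg (by omega : (0:ℤ) ≤ u - 1) (by omega : (0:ℤ) ≤ v - 1),
        mul_nonneg (by omega : (0:ℤ) ≤ c - (u + v - 1)) (by omega : (0:ℤ) ≤ u + v + c + (2*(u+v) - 1))]
    · have hca : c ≤ u + v + 1 := h1 (by omega)
      have hcb : u + v ≤ c + 1 := h2 (by omega)
      have : c = u + v - 1 ∨ c = u + v ∨ c = u + v + 1 := by omega
      rcases this with h | h | h <;> subst h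
      · nlinarith [sq_nonneg (u - v), sq_nonneg (2*k - u - v + 2)]
      · nlinarith [sq_nonneg (u - v), sq_nonneg (u + v - 2*k)]
      · nlinarith [sq_nonneg (u - v), sq_nonneg (u + v - 2*k + 2)]

lemma corner_main_aux (A B C : ℕ) (hA : 0 < A) (hC : 0 < C) (hAB : A ≤ B) :
    ∑ ℓ ∈ Finset.Icc 1 (min A B), min C (A + B + 1 - 2 * ℓ) ≤ ((A+B+C) ^ 2 + 3) / 12 := by
  rw [min_eq_left hAB, corner_closed_form A B C hAB,
    Nat.le_div_iff_mul_le (by norm_num)]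
  set k := min A ((A+B+1-C)/2) with hkdef
  have hkA : k ≤ A := min_le_left _ _
  have hkq : k ≤ (A+B+1-C)/2 := min_le_right _ _
  have hkq' : k < A → k = (A+B+1-C)/2 := by omega
  have hk1 : 1 ≤ k → C + 2*k ≤ A+B+1 := by omega
  have hk2 : k < A → A+B+1 ≤ C + 2*k + 2 := by omega
  obtain ⟨u, hu⟩ : ∃ u, A = k + u := ⟨A - k, by omega⟩
  obtain ⟨v, hv⟩ : ∃ v, B = k + v := ⟨B - k, by omega⟩
  have hA' : A - k = u := by omega
  have hB' : B - k = v := by omega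
  rw [hA', hB']
  have hz := corner_key_ineq (k:ℤ) u v C (by omega) (by omega) (by exact_mod_cast hC)
    (by omega) (by omega) (by intro h; omega) (by intro h; omega)
  zify
  have he : ((A:ℤ)+B+C) = 2*(k:ℤ) + u + v + C := by omega
  rw [he]
  linarith

/-- For positive integers A, B, C with A + B + C = m,
Σ_{ℓ=1}^{min(A,B)} min(C, A + B + 1 − 2ℓ) ≤ ⌊(m² + 3)/12⌋. -/
theorem corner_count_bound (A B C m : ℕ) (hA : 0 < A) (hB : 0 < B) (hC : 0 < C)
    (hm : A + B + C = m) :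
    ∑ ℓ ∈ Finset.Icc 1 (min A B), min C (A + B + 1 - 2 * ℓ) ≤ (m ^ 2 + 3) / 12 := by
  subst hm
  rcases le_total A B with h | h
  · exact corner_main_aux A B C hA hC h
  · have := corner_main_aux B A C hB hC h
    rw [min_comm A B, add_comm A B]
    exact this
end

section
/- Let A and C be positive integers with |A − C| ≤ 1 and set m = 2A + C. Then A² − t(t+1)/2 − s(s+1)/2 = ⌊(m² + 3)/12⌋, where t = ⌊(2A − C − 1)/2⌋ and s = ⌊(2A − C)/2⌋ (with the convention that t(t+1)/2 = 0 when t = −1). -/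
/-!
With `d = 2A - C`, the two triangular numbers add up to `⌊d² / 4⌋`. Writing `d = 2s + r` with
`r ∈ {0, 1}`, one finds `(2A + C)² + 3 = 12 (A² - ⌊d² / 4⌋) + (4 (C - A)² + 3 - 3r)`, and when
`|A - C| ≤ 1` this remainder lies in `[0, 12)`.
-/

theorem Int.two_mul_mul_succ_ediv_two (x : ℤ) : 2 * (x * (x + 1) / 2) = x * (x + 1) :=
  Int.mul_ediv_cancel' (Int.even_mul_succ_self x).two_dvd

theorem Int.sq_ediv_four (d : ℤ) : d ^ 2 / 4 = d / 2 * (d / 2 + d % 2) := by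
  have hd : d = 2 * (d / 2) + d % 2 := by omega
  have hr : d % 2 = 0 ∨ d % 2 = 1 := Int.emod_two_eq d
  generalize d / 2 = s, d % 2 = r at hd hr ⊢
  subst hd
  have hsq : (2 * s + r) ^ 2 = 4 * (s * (s + r)) + r := by
    rcases hr with rfl | rfl <;> ring
  omega

theorem Int.triangle_add_triangle_eq_sq_ediv_four (d : ℤ) :
    (d - 1) / 2 * ((d - 1) / 2 + 1) / 2 + d / 2 * (d / 2 + 1) / 2 = d ^ 2 / 4 := by
  have h₁ := Int.two_mul_mul_succ_ediv_two ((d - 1) / 2)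
  have h₂ := Int.two_mul_mul_succ_ediv_two (d / 2)
  rw [Int.sq_ediv_four]
  rcases Int.emod_two_eq d with hr | hr
  · rw [show (d - 1) / 2 = d / 2 - 1 by omega] at h₁ ⊢
    rw [hr]
    linarith
  · rw [show (d - 1) / 2 = d / 2 by omega] at h₁ ⊢
    rw [hr]
    linarith

theorem sq_sub_sq_ediv_four_eq (A C : ℤ) (h : |A - C| ≤ 1) :
    A ^ 2 - (2 * A - C) ^ 2 / 4 = ((2 * A + C) ^ 2 + 3) / 12 := by
  rw [Int.sq_ediv_four]
  set s := (2 * A - C) / 2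
  set r := (2 * A - C) % 2
  have hnum : (2 * A + C) ^ 2 + 3 =
      12 * (A ^ 2 - s * (s + r)) + (4 * (C - A) ^ 2 + 3 - 3 * r ^ 2) := by
    rw [show C = 2 * A - 2 * s - r by omega]
    ring
  have hrem : 0 ≤ 4 * (C - A) ^ 2 + 3 - 3 * r ^ 2 ∧ 4 * (C - A) ^ 2 + 3 - 3 * r ^ 2 < 12 := by
    have hCA : C - A = -1 ∨ C - A = 0 ∨ C - A = 1 := by rw [abs_le] at h; omega
    rcases Int.emod_two_eq (2 * A - C) with hr | hr <;> rcases hCA with hCA | hCA | hCA <;>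
      simp only [r, hr, hCA] <;> norm_num
  omega

theorem hexagon_queen_count_general (A C : ℕ) (m : ℕ)
    (h : |(A : ℤ) - (C : ℤ)| ≤ 1) (hm : m = 2 * A + C)
    (t s : ℤ) (ht : t = Int.fdiv (2 * (A : ℤ) - C - 1) 2)
    (hs : s = Int.fdiv (2 * (A : ℤ) - C) 2) :
    (A : ℤ) ^ 2 - t * (t + 1) / 2 - s * (s + 1) / 2 = ((m ^ 2 + 3) / 12 : ℕ) := by
  rw [Int.fdiv_eq_ediv_of_nonneg _ zero_le_two] at ht hs
  rw [sub_sub, ht, hs, Int.triangle_add_triangle_eq_sq_ediv_four, sq_sub_sq_ediv_four_eq _ _ h, hm]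
  push_cast
  rfl

/-- For positive integers A, C with |A − C| ≤ 1 and m = 2A + C,
one has A² − t(t+1)/2 − s(s+1)/2 = ⌊(m² + 3)/12⌋ where t = ⌊(2A − C − 1)/2⌋
and s = ⌊(2A − C)/2⌋ (the convention t(t+1)/2 = 0 for t = −1 holds
automatically). -/
theorem hexagon_queen_count (A C : ℕ) (m : ℕ) (hA : 0 < A) (hC : 0 < C)
    (h : |(A : ℤ) - (C : ℤ)| ≤ 1) (hm : m = 2 * A + C)
    (t s : ℤ) (ht : t = Int.fdiv (2 * (A : ℤ) - C - 1) 2)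
    (hs : s = Int.fdiv (2 * (A : ℤ) - C) 2) :
    (A : ℤ) ^ 2 - t * (t + 1) / 2 - s * (s + 1) / 2 = ((m ^ 2 + 3) / 12 : ℕ) :=
  hexagon_queen_count_general A C m h hm t s ht hs
end

section
/- Let A, B be positive integers, let x₁ < ⋯ < x_A and y₁ < ⋯ < y_B be strictly increasing sequences of integers, and for a positive integer ℓ define the ℓ-th ring to be the set of points (x_i, y_j) with min(i, j, A + 1 − i, B + 1 − j) = ℓ. Then for every integer c, the set of points (x, y) of the ℓ-th ring with x + y = c has at most 2 elements, and the set of points with x − y = c has at most 2 elements. -/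
/-- The ℓ-th ring of an A×B grid of indices (1-based): pairs (i,j) with
min(i, j, A+1−i, B+1−j) = ℓ.  Here indices are 0-based `Fin` values, so the
1-based index of `i : Fin A` is `i + 1` and `A + 1 − (i + 1) = A − i`. -/
def ringSet (A B ℓ : ℕ) : Finset (Fin A × Fin B) :=
  Finset.univ.filter fun ij =>
    min ((ij.1 : ℕ) + 1) (min ((ij.2 : ℕ) + 1)
      (min (A - (ij.1 : ℕ)) (B - (ij.2 : ℕ)))) = ℓ

lemma mem_ringSet {A B ℓ : ℕ} {p : Fin A × Fin B} :
    p ∈ ringSet A B ℓ ↔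
      (ℓ ≤ (p.1 : ℕ) + 1 ∧ ℓ ≤ (p.2 : ℕ) + 1 ∧ ℓ ≤ A - (p.1 : ℕ) ∧ ℓ ≤ B - (p.2 : ℕ) ∧
        (ℓ = (p.1 : ℕ) + 1 ∨ ℓ = (p.2 : ℕ) + 1 ∨ ℓ = A - (p.1 : ℕ) ∨ ℓ = B - (p.2 : ℕ))) := by
  rw [ringSet, Finset.mem_filter]
  constructor
  · rintro ⟨-, h⟩; omega
  · intro h; exact ⟨Finset.mem_univ _, by omega⟩

/-- No point of the ring can be strictly "between" other ring points in both
coordinates: if `p.1 < q.1 < r.1` and `s.2 < q.2 < t.2` with all five points on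
the ring, we get a contradiction, since `q` must achieve one of the four
boundary equalities. -/
lemma no_three {A B ℓ : ℕ} {p q r s t : Fin A × Fin B}
    (hp : p ∈ ringSet A B ℓ) (hq : q ∈ ringSet A B ℓ) (hr : r ∈ ringSet A B ℓ)
    (hs : s ∈ ringSet A B ℓ) (ht : t ∈ ringSet A B ℓ)
    (h1 : p.1 < q.1) (h2 : q.1 < r.1) (h3 : s.2 < q.2) (h4 : q.2 < t.2) : False := by
  rw [mem_ringSet] at hp hq hr hs ht
  have hp1 := p.1.isLt; have hr1 := r.1.isLt; have hs2 := s.2.isLt; have ht2 := t.2.isLt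
  have hq1 := q.1.isLt; have hq2 := q.2.isLt
  have h1' : (p.1 : ℕ) < q.1 := h1
  have h2' : (q.1 : ℕ) < r.1 := h2
  have h3' : (s.2 : ℕ) < q.2 := h3
  have h4' : (q.2 : ℕ) < t.2 := h4
  omega

/-- A set of pairs whose first coordinates determine the pair and which
contains no chain of three increasing first coordinates leading to a
contradiction has at most two elements. -/
lemma card_le_two_of_no_chain {A B : ℕ} (s : Finset (Fin A × Fin B))
    (hinj : ∀ p ∈ s, ∀ q ∈ s, p.1 = q.1 → p = q)
    (key : ∀ p ∈ s, ∀ q ∈ s, ∀ r ∈ s, p.1 < q.1 → q.1 < r.1 → False) :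
    s.card ≤ 2 := by
  by_contra h
  push_neg at h
  rw [Finset.two_lt_card_iff] at h
  obtain ⟨a, b, c, ha, hb, hc, hab, hac, hbc⟩ := h
  rcases lt_trichotomy a.1 b.1 with h1 | h1 | h1
  · rcases lt_trichotomy b.1 c.1 with h2 | h2 | h2
    · exact key a ha b hb c hc h1 h2
    · exact hbc (hinj _ hb _ hc h2)
    · rcases lt_trichotomy a.1 c.1 with h3 | h3 | h3
      · exact key a ha c hc b hb h3 h2
      · exact hac (hinj _ ha _ hc h3)
      · exact key c hc a ha b hb h3 h1
  · exact hab (hinj _ ha _ hb h1)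
  · rcases lt_trichotomy a.1 c.1 with h2 | h2 | h2
    · exact key b hb a ha c hc h1 h2
    · exact hac (hinj _ ha _ hc h2)
    · rcases lt_trichotomy b.1 c.1 with h3 | h3 | h3
      · exact key b hb c hc a ha h3 h2
      · exact hbc (hinj _ hb _ hc h3)
      · exact key c hc b hb a ha h3 h1

/-- With strictly increasing sequences x₁ < ⋯ < x_A and
y₁ < ⋯ < y_B, for every integer c, the ℓ-th ring contains at most 2 points
(x_i, y_j) with x_i + y_j = c, and at most 2 points with x_i − y_j = c. -/
theorem diagonal_meets_ring_in_at_most_two (A B : ℕ) (hA : 0 < A) (hB : 0 < B)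
    (x : Fin A → ℤ) (y : Fin B → ℤ) (hx : StrictMono x) (hy : StrictMono y)
    (ℓ : ℕ) (hℓ : 0 < ℓ) (c : ℤ) :
    ((ringSet A B ℓ).filter (fun ij => x ij.1 + y ij.2 = c)).card ≤ 2 ∧
    ((ringSet A B ℓ).filter (fun ij => x ij.1 - y ij.2 = c)).card ≤ 2 := by
  constructor
  · apply card_le_two_of_no_chain
    · intro p hp q hq h
      rw [Finset.mem_filter] at hp hq
      have : y p.2 = y q.2 := by rw [h] at hp; linarith [hp.2, hq.2]
      exact Prod.ext h (hy.injective this)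
    · intro p hp q hq r hr h1 h2
      rw [Finset.mem_filter] at hp hq hr
      have hqp : q.2 < p.2 := by
        have := hx h1
        exact hy.lt_iff_lt.mp (by linarith [hp.2, hq.2])
      have hrq : r.2 < q.2 := by
        have := hx h2
        exact hy.lt_iff_lt.mp (by linarith [hq.2, hr.2])
      exact no_three hp.1 hq.1 hr.1 hr.1 hp.1 h1 h2 hrq hqp
  · apply card_le_two_of_no_chain
    · intro p hp q hq h
      rw [Finset.mem_filter] at hp hq
      have : y p.2 = y q.2 := by rw [h] at hp; linarith [hp.2, hq.2]
      exact Prod.ext h (hy.injective this)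
    · intro p hp q hq r hr h1 h2
      rw [Finset.mem_filter] at hp hq hr
      have hpq : p.2 < q.2 := by
        have := hx h1
        exact hy.lt_iff_lt.mp (by linarith [hp.2, hq.2])
      have hqr : q.2 < r.2 := by
        have := hx h2
        exact hy.lt_iff_lt.mp (by linarith [hq.2, hr.2])
      exact no_three hp.1 hq.1 hr.1 hp.1 hr.1 h1 h2 hpq hqr
end
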